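/- Let α ∈ S_d^+, t > 0, u ∈ S_d^{++}. Then ψ(t,u) := u(I + 2tαu)⁻¹ = (u⁻¹ + 2tα)⁻¹ is symmetric positive definite, and φ(t,u) := p·log det(I + 2tαu) satisfies the semigroup/flow properties ψ(t+s, u) = ψ(t, ψ(s,u)) and φ(t+s, u) = φ(t, ψ(s,u)) + φ(s, u) for all s, t ≥ 0. -/

import Mathlib

open Matrix

/-- `ψ(t, w) = w (I + 2 t α w)⁻¹`, the state part of the Wishart flow with `β = 0`. -/
noncomputable def wishartPsi {d : ℕ} (α : Matrix (Fin d) (Fin d) ℝ) (t : ℝ)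
    (w : Matrix (Fin d) (Fin d) ℝ) : Matrix (Fin d) (Fin d) ℝ :=
  w * (1 + (2 * t) • (α * w))⁻¹

/-- `φ(t, w) = p log det (I + 2 t α w)`. -/
noncomputable def wishartPhi {d : ℕ} (p : ℝ) (α : Matrix (Fin d) (Fin d) ℝ) (t : ℝ)
    (w : Matrix (Fin d) (Fin d) ℝ) : ℝ :=
  p * Real.log (1 + (2 * t) • (α * w)).det

/-! Everything reduces to the factorisation `I + c α u = (u⁻¹ + c α) u`: it identifies
`ψ(t, u)` with `(u⁻¹ + 2tα)⁻¹`, so the flow only adds `2tα` to the precision matrix `u⁻¹`,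
and it makes the factors `I + 2tαu` multiplicative along the flow, which `log det` turns into
the cocycle identity for `φ`. -/

section General

variable {n : Type*} [Fintype n] [DecidableEq n]

lemma Matrix.one_add_smul_mul_eq_inv_add_smul_mul {R : Type*} [CommRing R]
    (α : Matrix n n R) {u : Matrix n n R} (hu : IsUnit u.det) (c : R) :
    1 + c • (α * u) = (u⁻¹ + c • α) * u := by
  rw [Matrix.add_mul, nonsing_inv_mul _ hu, smul_mul]

lemma Matrix.PosDef.inv_add_smul {α u : Matrix n n ℝ} (hu : u.PosDef) (hα : α.PosSemidef)
    {c : ℝ} (hc : 0 ≤ c) : (u⁻¹ + c • α).PosDef :=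
  hu.inv.add_posSemidef (hα.smul hc)

lemma Matrix.PosDef.det_one_add_smul_mul_pos {α u : Matrix n n ℝ} (hu : u.PosDef)
    (hα : α.PosSemidef) {c : ℝ} (hc : 0 ≤ c) : 0 < (1 + c • (α * u)).det := by
  rw [one_add_smul_mul_eq_inv_add_smul_mul α hu.det_pos.ne'.isUnit, det_mul]
  exact mul_pos (hu.inv_add_smul hα hc).det_pos hu.det_pos

end General

section Wishart

variable {d : ℕ} {α u : Matrix (Fin d) (Fin d) ℝ} {s t : ℝ}

lemma wishartPsi_eq_inv (hu : IsUnit u.det) (t : ℝ) :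
    wishartPsi α t u = (u⁻¹ + (2 * t) • α)⁻¹ := by
  rw [wishartPsi, one_add_smul_mul_eq_inv_add_smul_mul α hu, Matrix.mul_inv_rev,
    ← Matrix.mul_assoc, mul_nonsing_inv _ hu, Matrix.one_mul]

lemma posDef_wishartPsi (hα : α.PosSemidef) (hu : u.PosDef) (ht : 0 ≤ t) :
    (wishartPsi α t u).PosDef := by
  rw [wishartPsi_eq_inv hu.det_pos.ne'.isUnit]
  exact (hu.inv_add_smul hα (by positivity)).inv

lemma inv_wishartPsi (hα : α.PosSemidef) (hu : u.PosDef) (hs : 0 ≤ s) :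
    (wishartPsi α s u)⁻¹ = u⁻¹ + (2 * s) • α := by
  rw [wishartPsi_eq_inv hu.det_pos.ne'.isUnit,
    nonsing_inv_nonsing_inv _ (hu.inv_add_smul hα (by positivity)).det_pos.ne'.isUnit]

lemma wishartPsi_add (hα : α.PosSemidef) (hu : u.PosDef) (hs : 0 ≤ s) (t : ℝ) :
    wishartPsi α (t + s) u = wishartPsi α t (wishartPsi α s u) := by
  rw [wishartPsi_eq_inv hu.det_pos.ne'.isUnit,
    wishartPsi_eq_inv (posDef_wishartPsi hα hu hs).det_pos.ne'.isUnit, inv_wishartPsi hα hu hs,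
    add_assoc, ← add_smul, ← mul_add, add_comm s]

lemma one_add_smul_mul_wishartPsi_mul (hs : IsUnit (1 + (2 * s) • (α * u)).det) (t : ℝ) :
    (1 + (2 * t) • (α * wishartPsi α s u)) * (1 + (2 * s) • (α * u)) =
      1 + (2 * (t + s)) • (α * u) := by
  rw [wishartPsi, Matrix.add_mul, Matrix.one_mul, smul_mul, Matrix.mul_assoc α,
    Matrix.mul_assoc u, nonsing_inv_mul _ hs, Matrix.mul_one, add_assoc, ← add_smul,
    ← mul_add, add_comm s]

lemma wishartPhi_add (p : ℝ) (hα : α.PosSemidef) (hu : u.PosDef) (hs : 0 ≤ s) (ht : 0 ≤ t) :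
    wishartPhi p α (t + s) u = wishartPhi p α t (wishartPsi α s u) + wishartPhi p α s u := by
  have hdet_s := hu.det_one_add_smul_mul_pos hα (by positivity : 0 ≤ 2 * s)
  have hdet_t := (posDef_wishartPsi hα hu hs).det_one_add_smul_mul_pos hα
    (by positivity : 0 ≤ 2 * t)
  rw [wishartPhi, ← one_add_smul_mul_wishartPsi_mul hdet_s.ne'.isUnit, det_mul,
    Real.log_mul hdet_t.ne' hdet_s.ne', mul_add, wishartPhi, wishartPhi]

end Wishart

theorem stmt_18_general {d : ℕ} (α u : Matrix (Fin d) (Fin d) ℝ) (p : ℝ)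
    (hα : α.PosSemidef) (hu : u.PosDef) :
    (∀ t : ℝ, 0 < t →
      wishartPsi α t u = (u⁻¹ + (2 * t) • α)⁻¹ ∧ (wishartPsi α t u).PosDef) ∧
    (∀ s t : ℝ, 0 ≤ s → 0 ≤ t →
      wishartPsi α (t + s) u = wishartPsi α t (wishartPsi α s u) ∧
      wishartPhi p α (t + s) u =
        wishartPhi p α t (wishartPsi α s u) + wishartPhi p α s u) :=
  ⟨fun t ht => ⟨wishartPsi_eq_inv hu.det_pos.ne'.isUnit t, posDef_wishartPsi hα hu ht.le⟩,
    fun _ t hs ht => ⟨wishartPsi_add hα hu hs t, wishartPhi_add p hα hu hs ht⟩⟩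

theorem stmt_18 {d : ℕ} (α u : Matrix (Fin d) (Fin d) ℝ) (p : ℝ) (hp : 0 ≤ p)
    (hα : α.PosSemidef) (hu : u.PosDef) :
    (∀ t : ℝ, 0 < t →
      wishartPsi α t u = (u⁻¹ + (2 * t) • α)⁻¹ ∧ (wishartPsi α t u).PosDef) ∧
    (∀ s t : ℝ, 0 ≤ s → 0 ≤ t →
      wishartPsi α (t + s) u = wishartPsi α t (wishartPsi α s u) ∧
      wishartPhi p α (t + s) u =
        wishartPhi p α t (wishartPsi α s u) + wishartPhi p α s u) :=
  stmt_18_general α u p hα hu
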